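/- arXiv:1308.6473 — 3 statements merged into one kernel-verified Lean document; each statement's English description precedes it below -/
import Mathlib

section
/- For all a,b,c,i,j,k ∈ ℕ, the 3d R matrix elements satisfy the symmetry (q²;q²)_a (q²;q²)_b (q²;q²)_c · R^{a,b,c}_{i,j,k} = (q²;q²)_i (q²;q²)_j (q²;q²)_k · R^{i,j,k}_{a,b,c} in ℚ(q). -/
/-!
Both sides expand as sums over the same index `l`, and they agree term by term. After clearing
the denominators of the Gaussian binomials, the `l`-th term of the left side is
`±q^E (q²)_a (q²)_b (q²)_i (q²)_j (q²)_{c+b-l} / ((q²)_l (q²)_{b-l} (q²)_{j-l} (q²)_{i-b+l})`,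
and the weight conservation `a + b = i + j`, `b + c = j + k` gives `c + b - l = k + j - l`,
`i - (b - l) = a - (j - l)` and makes the exponent `E` symmetric, so this expression is invariant
under `(a, b, c) ↔ (i, j, k)`. All of this works over any field in which `q²` is not a root of
unity, which holds for the indeterminate of `ℚ(q)`.
-/

noncomputable section
open Finset

/-- `(x;p)_m = ∏_{j=1}^m (1 - x p^{j-1})`. -/
def poch {K : Type} [Field K] (x p : K) (m : ℕ) : K := ∏ j ∈ range m, (1 - x * p ^ j)

/-- Gaussian binomial `binom(m,n)_p`, zero unless `0 ≤ n ≤ m`. -/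
def qbinom {K : Type} [Field K] (p : K) (m n : ℕ) : K :=
  if n ≤ m then poch p p m / (poch p p n * poch p p (m - n)) else 0

/-- The 3d R matrix element `R^{a,b,c}_{i,j,k}`. -/
def R3 {K : Type} [Field K] (q : K) (a b c i j k : ℕ) : K :=
  if a + b = i + j ∧ b + c = j + k then
    ∑ l ∈ range (b + 1),
      (-1 : K) ^ l *
        q ^ ((i : ℤ) * ((c : ℤ) - (j : ℤ)) + ((k : ℤ) + 1) * (l : ℤ)
            + ((b : ℤ) - (l : ℤ)) * ((b : ℤ) - (l : ℤ) - (k : ℤ))) *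
        (poch (q ^ 2) (q ^ 2) (c + (b - l)) / poch (q ^ 2) (q ^ 2) c) *
        qbinom (q ^ 2) i (b - l) * qbinom (q ^ 2) j l
  else 0

section General

variable {K : Type} [Field K]

lemma qbinom_eq_zero_of_lt (p : K) {m n : ℕ} (h : m < n) : qbinom p m n = 0 := by
  simp [qbinom, not_le.2 h]

def R3Summand (q : K) (b c i j k l : ℕ) : K :=
  (-1 : K) ^ l *
    q ^ ((i : ℤ) * ((c : ℤ) - (j : ℤ)) + ((k : ℤ) + 1) * (l : ℤ)
        + ((b : ℤ) - (l : ℤ)) * ((b : ℤ) - (l : ℤ) - (k : ℤ))) *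
    (poch (q ^ 2) (q ^ 2) (c + (b - l)) / poch (q ^ 2) (q ^ 2) c) *
    qbinom (q ^ 2) i (b - l) * qbinom (q ^ 2) j l

lemma R3_eq_sum_R3Summand (q : K) {a b c i j k : ℕ} (h : a + b = i + j ∧ b + c = j + k) :
    R3 q a b c i j k = ∑ l ∈ range (b + 1), R3Summand q b c i j k l :=
  if_pos h

lemma R3_eq_zero (q : K) {a b c i j k : ℕ} (h : ¬(a + b = i + j ∧ b + c = j + k)) :
    R3 q a b c i j k = 0 :=
  if_neg h

lemma R3Summand_eq_zero_of_lt (q : K) (b c i k : ℕ) {j l : ℕ} (h : j < l) :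
    R3Summand q b c i j k l = 0 := by
  rw [R3Summand, qbinom_eq_zero_of_lt _ h, mul_zero]

lemma sum_range_R3Summand_eq (q : K) (b c i j k : ℕ) :
    ∑ l ∈ range (b + 1), R3Summand q b c i j k l =
      ∑ l ∈ range (min b j + 1), R3Summand q b c i j k l := by
  refine (sum_subset (range_subset_range.2 (by omega)) fun l hl hl' => ?_).symm
  simp only [mem_range] at hl hl'
  exact R3Summand_eq_zero_of_lt q b c i k (by omega)

lemma R3_exponent_symm {a b c i j k l : ℤ} (h1 : a + b = i + j) (h2 : b + c = j + k) :
    i * (c - j) + (k + 1) * l + (b - l) * (b - l - k) =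
      a * (k - b) + (c + 1) * l + (j - l) * (j - l - c) := by
  obtain rfl : i = a + b - j := by linarith
  obtain rfl : k = b + c - j := by linarith
  ring

variable {q : K} (hq : ∀ n, poch (q ^ 2) (q ^ 2) n ≠ 0)
include hq

lemma poch_mul_R3Summand_symm {a b c i j k l : ℕ} (h1 : a + b = i + j) (h2 : b + c = j + k)
    (hlb : l ≤ b) (hlj : l ≤ j) :
    poch (q ^ 2) (q ^ 2) a * poch (q ^ 2) (q ^ 2) b * poch (q ^ 2) (q ^ 2) c *
        R3Summand q b c i j k l =
      poch (q ^ 2) (q ^ 2) i * poch (q ^ 2) (q ^ 2) j * poch (q ^ 2) (q ^ 2) k *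
        R3Summand q j k a b c l := by
  by_cases hbi : b - l ≤ i
  · have hja : j - l ≤ a := by omega
    have hcb : c + (b - l) = k + (j - l) := by omega
    have hib : i - (b - l) = a - (j - l) := by omega
    have hE := R3_exponent_symm (l := l) (mod_cast h1 : (a : ℤ) + b = i + j)
      (mod_cast h2 : (b : ℤ) + c = j + k)
    simp only [R3Summand, qbinom, if_pos hbi, if_pos hlj, if_pos hja, if_pos hlb]
    rw [hcb, hib, hE]
    have := hq c; have := hq k; have := hq l
    have := hq (b - l); have := hq (j - l); have := hq (a - (j - l))
    field_simp
  · have hja : ¬j - l ≤ a := by omega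
    simp only [R3Summand, qbinom, if_neg hbi, if_neg hja, mul_zero, zero_mul]

theorem poch_mul_R3_symm (a b c i j k : ℕ) :
    poch (q ^ 2) (q ^ 2) a * poch (q ^ 2) (q ^ 2) b * poch (q ^ 2) (q ^ 2) c *
        R3 q a b c i j k =
      poch (q ^ 2) (q ^ 2) i * poch (q ^ 2) (q ^ 2) j * poch (q ^ 2) (q ^ 2) k *
        R3 q i j k a b c := by
  by_cases h : a + b = i + j ∧ b + c = j + k
  · rw [R3_eq_sum_R3Summand q h, R3_eq_sum_R3Summand q ⟨h.1.symm, h.2.symm⟩,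
      sum_range_R3Summand_eq, sum_range_R3Summand_eq, min_comm, mul_sum, mul_sum]
    refine sum_congr rfl fun l hl => ?_
    rw [mem_range] at hl
    exact poch_mul_R3Summand_symm hq h.1 h.2 (by omega) (by omega)
  · rw [R3_eq_zero q h, R3_eq_zero q fun h' => h ⟨h'.1.symm, h'.2.symm⟩, mul_zero, mul_zero]

end General

lemma RatFunc.one_sub_X_pow_ne_zero {F : Type} [Field F] {n : ℕ} (hn : n ≠ 0) :
    (1 : RatFunc F) - RatFunc.X ^ n ≠ 0 := by
  rw [← RatFunc.algebraMap_X, ← map_pow, ← map_one (algebraMap (Polynomial F) _), ← map_sub,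
    map_ne_zero_iff _ (RatFunc.algebraMap_injective F)]
  intro h
  simpa [zero_pow hn] using congrArg (Polynomial.eval 0) h

lemma poch_X_sq_ne_zero {F : Type} [Field F] (n : ℕ) :
    poch ((RatFunc.X : RatFunc F) ^ 2) (RatFunc.X ^ 2) n ≠ 0 :=
  prod_ne_zero_iff.2 fun j _ => by
    rw [← pow_mul, ← pow_add]
    exact RatFunc.one_sub_X_pow_ne_zero (by omega)

theorem R3_symmetry (a b c i j k : ℕ) :
    poch ((RatFunc.X : RatFunc ℚ) ^ 2) (RatFunc.X ^ 2) a *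
      poch ((RatFunc.X : RatFunc ℚ) ^ 2) (RatFunc.X ^ 2) b *
      poch ((RatFunc.X : RatFunc ℚ) ^ 2) (RatFunc.X ^ 2) c *
      R3 (RatFunc.X : RatFunc ℚ) a b c i j k =
    poch ((RatFunc.X : RatFunc ℚ) ^ 2) (RatFunc.X ^ 2) i *
      poch ((RatFunc.X : RatFunc ℚ) ^ 2) (RatFunc.X ^ 2) j *
      poch ((RatFunc.X : RatFunc ℚ) ^ 2) (RatFunc.X ^ 2) k *
      R3 (RatFunc.X : RatFunc ℚ) i j k a b c :=
  poch_mul_R3_symm poch_X_sq_ne_zero a b c i j k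
end
end

section
/- For every d ≥ 0 and both sign choices, the vector u^{(d)}_± satisfies (Δk_0) u^{(d)}_± = q^{−4d−4} u^{(d)}_± and (Δe_0) u^{(d)}_± = 0, where Δe_0 = 1⊗e_0 + e_0⊗k_0 and Δk_0 = k_0⊗k_0 act on F⊗F (these operators are independent of the parameters x, y). -/
/- The vectors u^{(d)}_± satisfy Δk₀ u = q^{-4d-4} u and Δe₀ u = 0. -/

noncomputable section
open Finset TensorProduct

/-- The operator on `F = ⊕_{m≥0} K|m⟩ = ℕ →₀ K` sending the basis vector `|m⟩` to `v m`. -/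
def opOf {K : Type} [Field K] (v : ℕ → (ℕ →₀ K)) : Module.End K (ℕ →₀ K) :=
  Finsupp.lsum K fun m => LinearMap.toSpanSingleton K (ℕ →₀ K) (v m)

/-- `[m] = (q^m - q^{-m})/(q - q^{-1})`. -/
def qint {K : Type} [Field K] (q : K) (m : ℤ) : K := (q ^ m - q ^ (-m)) / (q - q⁻¹)

/-- `[n]_q! = ∏_{l=1}^n [l]_q`. -/
def qfac {K : Type} [Field K] (q : K) (n : ℕ) : K := ∏ l ∈ Icc 1 n, qint q (l : ℤ)

/-- `e₀|m⟩ = -ε₀ ([2m][2m-2]/[4]²)|m-2⟩`. -/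
def e0W {K : Type} [Field K] (q ε₀ : K) : Module.End K (ℕ →₀ K) :=
  opOf fun m => Finsupp.single (m - 2)
    (-(ε₀ * (qint q (2 * (m : ℤ)) * qint q (2 * (m : ℤ) - 2) / (qint q 4) ^ 2)))

/-- `f₀|m⟩ = |m+2⟩`. -/
def f0W {K : Type} [Field K] : Module.End K (ℕ →₀ K) :=
  opOf fun m => Finsupp.single (m + 2) (1 : K)

/-- `k₀|m⟩ = ε₀ q^{-4m-2}|m⟩`. -/
def k0W {K : Type} [Field K] (q ε₀ : K) : Module.End K (ℕ →₀ K) :=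
  opOf fun m => Finsupp.single m (ε₀ * q ^ (-(4 * (m : ℤ) + 2)))

/-- `k₀⁻¹|m⟩ = ε₀ q^{4m+2}|m⟩`. -/
def k0Winv {K : Type} [Field K] (q ε₀ : K) : Module.End K (ℕ →₀ K) :=
  opOf fun m => Finsupp.single m (ε₀ * q ^ (4 * (m : ℤ) + 2))

/-- `e₁|m⟩ = x|m+1⟩`. -/
def e1W {K : Type} [Field K] (x : K) : Module.End K (ℕ →₀ K) :=
  opOf fun m => Finsupp.single (m + 1) x

/-- `f₁|m⟩ = ε₁ (-1)^m x⁻¹ ([2m]/[2])|m-1⟩`. -/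
def f1W {K : Type} [Field K] (q ε₁ x : K) : Module.End K (ℕ →₀ K) :=
  opOf fun m => Finsupp.single (m - 1)
    (ε₁ * (-1 : K) ^ m * x⁻¹ * (qint q (2 * (m : ℤ)) / qint q 2))

/-- `k₁|m⟩ = ε₁ (-1)^m q^{2m+1}|m⟩`. -/
def k1W {K : Type} [Field K] (q ε₁ : K) : Module.End K (ℕ →₀ K) :=
  opOf fun m => Finsupp.single m (ε₁ * (-1 : K) ^ m * q ^ (2 * (m : ℤ) + 1))

/-- `k₁⁻¹|m⟩ = ε₁ (-1)^m q^{-2m-1}|m⟩`. -/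
def k1Winv {K : Type} [Field K] (q ε₁ : K) : Module.End K (ℕ →₀ K) :=
  opOf fun m => Finsupp.single m (ε₁ * (-1 : K) ^ m * q ^ (-(2 * (m : ℤ) + 1)))

/-- The zero of `F ⊗ F` (made explicit to help instance resolution). -/
noncomputable instance instZeroTensorFinsupp {K : Type} [Field K] :
    Zero ((ℕ →₀ K) ⊗[K] (ℕ →₀ K)) :=
  (inferInstance : AddZeroClass ((ℕ →₀ K) ⊗[K] (ℕ →₀ K))).toZero

/-- `u^{(d)}_+ = Σ_{j=0}^d (-1)^{j(j-1)/2} q^{j(j-1)} binom(d,j)_{q⁴} |j⟩⊗|d-j⟩`. -/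
def uvecP {K : Type} [Field K] (q : K) (d : ℕ) : (ℕ →₀ K) ⊗[K] (ℕ →₀ K) :=
  ∑ j ∈ range (d + 1),
    ((-1 : K) ^ (j * (j - 1) / 2) * q ^ (j * (j - 1)) * qbinom (q ^ 4) d j) •
      (Finsupp.single j (1 : K) ⊗ₜ[K] Finsupp.single (d - j) (1 : K))

/-- `u^{(d)}_- = Σ_{j=0}^d (-1)^{j(j+1)/2} q^{j(j-1)} binom(d,j)_{q⁴} |j⟩⊗|d-j⟩`. -/
def uvecM {K : Type} [Field K] (q : K) (d : ℕ) : (ℕ →₀ K) ⊗[K] (ℕ →₀ K) :=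
  ∑ j ∈ range (d + 1),
    ((-1 : K) ^ (j * (j + 1) / 2) * q ^ (j * (j - 1)) * qbinom (q ^ 4) d j) •
      (Finsupp.single j (1 : K) ⊗ₜ[K] Finsupp.single (d - j) (1 : K))

/-- `Δe₀ = 1⊗e₀ + e₀⊗k₀` (with ε₀ = 1). -/
def De0 {K : Type} [Field K] (q : K) : Module.End K ((ℕ →₀ K) ⊗[K] (ℕ →₀ K)) :=
  TensorProduct.map LinearMap.id (e0W q 1) + TensorProduct.map (e0W q 1) (k0W q 1)

/-- `Δk₀ = k₀⊗k₀` (with ε₀ = 1). -/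
def Dk0 {K : Type} [Field K] (q : K) : Module.End K ((ℕ →₀ K) ⊗[K] (ℕ →₀ K)) :=
  TensorProduct.map (k0W q 1) (k0W q 1)

/-- `Δf₀ = f₀⊗1 + k₀⁻¹⊗f₀` (with ε₀ = 1). -/
def Df0 {K : Type} [Field K] (q : K) : Module.End K ((ℕ →₀ K) ⊗[K] (ℕ →₀ K)) :=
  TensorProduct.map f0W LinearMap.id + TensorProduct.map (k0Winv q 1) f0W

/-!
`Δk₀` multiplies every `|j⟩ ⊗ |d-j⟩` by `q^{-4d-4}`. Write `e₀|m⟩ = A(m)|m-2⟩`; then `Δe₀` sends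
`Σ c_j |j⟩ ⊗ |d-j⟩` to `Σ_j (c_j A(d-j) + q^{-4(d-j)+6} c_{j+2} A(j+2)) |j⟩ ⊗ |d-j-2⟩`, and
`A(m+1) = -(1-p^{m+1})(1-p^m) / (q^{4m+2}((q-q⁻¹)[4])²)` with `p = q⁴`. Hence `Δe₀` kills the
vector as soon as `c_{j+2}(1-p^{j+1})(1-p^{j+2}) = -q^{4j+2} c_j (1-p^{d-j})(1-p^{d-j-1})`. For
`c_j = (-1)^{j(j∓1)/2} q^{j(j-1)} binom(d,j)_p` the sign flips from `j` to `j+2`, `q^{j(j-1)}`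
gains the factor `q^{4j+2}`, and the ratio of consecutive Gaussian binomials supplies the rest.
-/

section GaussianBinomial

variable {K : Type} [Field K] {p : K}

theorem Transcendental.not_isOfFinOrder {R A : Type*} [CommRing R] [Ring A] [Algebra R A]
    [Nontrivial R] {x : A} (hx : Transcendental R x) : ¬IsOfFinOrder x := fun h =>
  let ⟨_, hn, hx1⟩ := isOfFinOrder_iff_pow_eq_one.1 h
  hx (IsAlgebraic.of_pow hn (hx1 ▸ isAlgebraic_one))

theorem one_sub_pow_ne_zero (hp : ¬IsOfFinOrder p) {n : ℕ} (hn : 0 < n) : 1 - p ^ n ≠ 0 :=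
  sub_ne_zero.2 fun h => hp (isOfFinOrder_iff_pow_eq_one.2 ⟨n, hn, h.symm⟩)

theorem poch_succ (x : K) (m : ℕ) : poch x p (m + 1) = poch x p m * (1 - x * p ^ m) :=
  prod_range_succ _ m

theorem poch_self_ne_zero (hp : ¬IsOfFinOrder p) (n : ℕ) : poch p p n ≠ 0 :=
  prod_ne_zero_iff.2 fun j _ => by
    rw [← pow_succ']
    exact one_sub_pow_ne_zero hp j.succ_pos

theorem qbinom_of_lt {d j : ℕ} (h : d < j) : qbinom p d j = 0 := if_neg h.not_ge

theorem qbinom_succ_mul (hp : ¬IsOfFinOrder p) {d j : ℕ} (hj : j < d) :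
    qbinom p d (j + 1) * (1 - p ^ (j + 1)) = qbinom p d j * (1 - p ^ (d - j)) := by
  obtain ⟨n, rfl⟩ := Nat.exists_eq_add_of_lt hj
  have hdj : j + n + 1 - j = n + 1 := by omega
  have hdj' : j + n + 1 - (j + 1) = n := by omega
  rw [qbinom, qbinom, if_pos (show j + 1 ≤ _ from hj), if_pos hj.le, hdj, hdj', poch_succ p j,
    poch_succ p n, ← pow_succ', ← pow_succ']
  have hpoch := poch_self_ne_zero hp
  have hj1 := one_sub_pow_ne_zero hp j.succ_pos
  have hn1 := one_sub_pow_ne_zero hp n.succ_pos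
  field_simp

theorem qbinom_add_two_mul (hp : ¬IsOfFinOrder p) {d j n : ℕ} (hd : j + 2 + n = d) :
    qbinom p d (j + 2) * ((1 - p ^ (j + 1)) * (1 - p ^ (j + 2))) =
      qbinom p d j * ((1 - p ^ (n + 1)) * (1 - p ^ (n + 2))) := by
  have h1 := qbinom_succ_mul hp (show j + 1 < d by omega)
  have h0 := qbinom_succ_mul hp (show j < d by omega)
  rw [show d - (j + 1) = n + 1 by omega] at h1
  rw [show d - j = n + 2 by omega] at h0
  linear_combination (1 - p ^ (j + 1)) * h1 + (1 - p ^ (n + 1)) * h0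

end GaussianBinomial

section Operators

variable {K : Type} [Field K] {q : K}

theorem opOf_single (v : ℕ → (ℕ →₀ K)) (m : ℕ) (c : K) :
    opOf v (Finsupp.single m c) = c • v m := by
  simp [opOf]

def e0Coef (q : K) (m : ℕ) : K :=
  -(qint q (2 * (m : ℤ)) * qint q (2 * (m : ℤ) - 2) / qint q 4 ^ 2)

theorem e0W_one_single (m : ℕ) :
    e0W q 1 (Finsupp.single m 1) = e0Coef q m • Finsupp.single (m - 2) 1 := by
  rw [e0W, opOf_single, one_smul, Finsupp.smul_single_one, e0Coef, one_mul]

theorem k0W_one_single (m : ℕ) :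
    k0W q 1 (Finsupp.single m 1) = (q ^ (4 * m + 2))⁻¹ • Finsupp.single m 1 := by
  rw [k0W, opOf_single, one_smul, Finsupp.smul_single_one, one_mul, ← zpow_natCast, ← zpow_neg]
  push_cast
  rfl

theorem e0Coef_zero : e0Coef q 0 = 0 := by simp [e0Coef, qint]

theorem e0Coef_one : e0Coef q 1 = 0 := by simp [e0Coef, qint]

theorem qint_two_mul (hq : q ≠ 0) (m : ℕ) :
    qint q (2 * m) = ((q ^ 4) ^ m - 1) / (q ^ (2 * m) * (q - q⁻¹)) := by
  rw [qint, ← pow_mul, zpow_neg, zpow_mul, zpow_natCast]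
  field_simp
  ring

theorem e0Coef_succ (hq : q ≠ 0) (m : ℕ) :
    e0Coef q (m + 1) =
      -((1 - (q ^ 4) ^ (m + 1)) * (1 - (q ^ 4) ^ m) /
        (q ^ (4 * m + 2) * ((q - q⁻¹) * qint q 4) ^ 2)) := by
  have h := qint_two_mul hq m
  have h1 := qint_two_mul hq (m + 1)
  rw [e0Coef, h1, show 2 * ((m + 1 : ℕ) : ℤ) - 2 = 2 * m by push_cast; ring, h]
  field_simp
  ring

end Operators

section Coproduct

variable {K : Type} [Field K] {q : K}

def ket (a b : ℕ) : (ℕ →₀ K) ⊗[K] (ℕ →₀ K) :=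
  Finsupp.single a 1 ⊗ₜ Finsupp.single b 1

def weightVec (d : ℕ) (c : ℕ → K) : (ℕ →₀ K) ⊗[K] (ℕ →₀ K) :=
  ∑ j ∈ range (d + 1), c j • ket j (d - j)

theorem Dk0_ket (a b : ℕ) :
    Dk0 q (ket a b) = (q ^ (4 * a + 2) * q ^ (4 * b + 2))⁻¹ • ket a b := by
  rw [Dk0, ket, map_tmul, k0W_one_single, k0W_one_single, smul_tmul_smul, mul_inv]

theorem De0_ket (a b : ℕ) :
    De0 q (ket a b) =
      e0Coef q b • ket a (b - 2) + (e0Coef q a * (q ^ (4 * b + 2))⁻¹) • ket (a - 2) b := by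
  rw [De0, LinearMap.add_apply, ket, map_tmul, map_tmul, LinearMap.id_apply, e0W_one_single,
    e0W_one_single, k0W_one_single, tmul_smul, smul_tmul_smul, ket, ket]

theorem Dk0_weightVec (d : ℕ) (c : ℕ → K) :
    Dk0 q (weightVec d c) = q ^ (-(4 * (d : ℤ) + 4)) • weightVec d c := by
  rw [weightVec, map_sum, smul_sum]
  refine sum_congr rfl fun j hj => ?_
  have hjd : j + (d - j) = d := Nat.add_sub_cancel' (Nat.lt_succ_iff.1 (mem_range.1 hj))
  have hpow : q ^ (4 * j + 2) * q ^ (4 * (d - j) + 2) = q ^ (4 * d + 4) := by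
    rw [← pow_add]
    congr 1
    omega
  rw [map_smul, Dk0_ket, hpow, smul_comm, zpow_neg, ← zpow_natCast]
  push_cast
  rfl

end Coproduct

theorem sum_range_eq_sum_range_add_two {M : Type*} [AddCommMonoid M] {f : ℕ → M} {n : ℕ}
    (h0 : f 0 = 0) (h1 : f 1 = 0) (hn : f n = 0) (hn1 : f (n + 1) = 0) :
    ∑ j ∈ range n, f j = ∑ j ∈ range n, f (j + 2) := by
  have h := (sum_range_succ f (n + 1)).symm.trans (sum_range_succ' f (n + 1))
  rw [sum_range_succ, sum_range_succ', hn, hn1, h0, h1] at h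
  simpa using h

section HighestWeight

variable {K : Type} [Field K] {q : K} {d : ℕ} {c : ℕ → K}

theorem De0_weightVec (hc : ∀ j, d < j → c j = 0) :
    De0 q (weightVec d c) = ∑ j ∈ range (d + 1),
      (c j * e0Coef q (d - j) + c (j + 2) * e0Coef q (j + 2) * (q ^ (4 * (d - j - 2) + 2))⁻¹) •
        ket j (d - j - 2) := by
  simp only [weightVec, map_sum, map_smul, De0_ket, smul_add, smul_smul, sum_add_distrib,
    add_smul, mul_assoc]
  congr 1
  refine sum_range_eq_sum_range_add_two ?_ ?_ ?_ ?_
  · simp [e0Coef_zero]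
  · simp [e0Coef_one]
  · simp [hc (d + 1) (by omega)]
  · simp [hc (d + 1 + 1) (by omega)]

theorem e0Coef_cancel (hq : q ≠ 0) {j n : ℕ} {a b : K}
    (h : b * ((1 - (q ^ 4) ^ (j + 1)) * (1 - (q ^ 4) ^ (j + 2))) =
      -(a * q ^ (4 * j + 2) * ((1 - (q ^ 4) ^ (n + 1)) * (1 - (q ^ 4) ^ (n + 2))))) :
    a * e0Coef q (n + 2) + b * e0Coef q (j + 2) * (q ^ (4 * n + 2))⁻¹ = 0 := by
  have key : a * ((1 - (q ^ 4) ^ (n + 2)) * (1 - (q ^ 4) ^ (n + 1))) / q ^ (4 * (n + 1) + 2) +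
      b * ((1 - (q ^ 4) ^ (j + 2)) * (1 - (q ^ 4) ^ (j + 1))) /
        (q ^ (4 * (j + 1) + 2) * q ^ (4 * n + 2)) = 0 := by
    field_simp
    linear_combination q ^ (4 * n + 6) * h
  rw [e0Coef_succ hq, e0Coef_succ hq]
  -- `((q - q⁻¹)[4])²` may vanish, so it is factored out rather than cleared
  generalize ((q - q⁻¹) * qint q 4) ^ 2 = E
  linear_combination -E⁻¹ * key

theorem De0_weightVec_eq_zero (hq : q ≠ 0) (hc : ∀ j, d < j → c j = 0)
    (hrec : ∀ j n, j + 2 + n = d →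
      c (j + 2) * ((1 - (q ^ 4) ^ (j + 1)) * (1 - (q ^ 4) ^ (j + 2))) =
        -(c j * q ^ (4 * j + 2) * ((1 - (q ^ 4) ^ (n + 1)) * (1 - (q ^ 4) ^ (n + 2))))) :
    De0 q (weightVec d c) = 0 := by
  rw [De0_weightVec hc]
  refine sum_eq_zero fun j _ => ?_
  rcases le_or_gt (j + 2) d with hj | hj
  · obtain ⟨n, rfl⟩ := Nat.exists_eq_add_of_le hj
    rw [show j + 2 + n - j = n + 2 by omega, Nat.add_sub_cancel,
      e0Coef_cancel hq (hrec j n rfl), zero_smul]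
  · obtain hdj | hdj : d - j = 0 ∨ d - j = 1 := by omega
    all_goals simp [hdj, hc (j + 2) hj, e0Coef_zero, e0Coef_one]

theorem neg_one_pow_choose_two_add_two (k : ℕ) :
    (-1 : K) ^ ((k + 2).choose 2) = -(-1) ^ k.choose 2 := by
  have h : (k + 2).choose 2 = k.choose 2 + 2 * k + 1 := by
    rw [Nat.choose_succ_succ' (k + 1) 1, Nat.choose_succ_succ' k 1, Nat.choose_one_right,
      Nat.choose_one_right]
    ring
  rw [h, pow_succ, pow_add, pow_mul]
  simp

theorem signed_qbinom_rec (hp : ¬IsOfFinOrder (q ^ 4)) {s : ℕ → K}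
    (hs : ∀ j, s (j + 2) = -s j) {j n : ℕ} (hd : j + 2 + n = d) :
    s (j + 2) * q ^ ((j + 2) * (j + 2 - 1)) * qbinom (q ^ 4) d (j + 2) *
        ((1 - (q ^ 4) ^ (j + 1)) * (1 - (q ^ 4) ^ (j + 2))) =
      -(s j * q ^ (j * (j - 1)) * qbinom (q ^ 4) d j * q ^ (4 * j + 2) *
        ((1 - (q ^ 4) ^ (n + 1)) * (1 - (q ^ 4) ^ (n + 2)))) := by
  have hexp : (j + 2) * (j + 2 - 1) = j * (j - 1) + (4 * j + 2) := by
    rcases j with _ | k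
    · rfl
    · rw [show k + 1 + 2 - 1 = k + 2 by omega, Nat.add_sub_cancel]
      ring
  rw [hs, hexp, pow_add]
  linear_combination -(s j * q ^ (j * (j - 1)) * q ^ (4 * j + 2)) * qbinom_add_two_mul hp hd

theorem De0_weightVec_signed_qbinom (hq : q ≠ 0) (hp : ¬IsOfFinOrder (q ^ 4)) {s : ℕ → K}
    (hs : ∀ j, s (j + 2) = -s j) (d : ℕ) :
    De0 q (weightVec d fun j => s j * q ^ (j * (j - 1)) * qbinom (q ^ 4) d j) = 0 :=
  De0_weightVec_eq_zero hq (fun j hj => by simp [qbinom_of_lt hj])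
    fun _ _ hd => signed_qbinom_rec hp hs hd

end HighestWeight

theorem uvec_highest_weight
    (K : Type) [Field K] [Algebra ℚ K] (q : K) (hq : Transcendental ℚ q) (d : ℕ) :
    Dk0 q (uvecP q d) = q ^ (-(4 * (d : ℤ) + 4)) • uvecP q d ∧
    De0 q (uvecP q d) = 0 ∧
    Dk0 q (uvecM q d) = q ^ (-(4 * (d : ℤ) + 4)) • uvecM q d ∧
    De0 q (uvecM q d) = 0 := by
  have hq0 : q ≠ 0 := fun h => hq (h ▸ isAlgebraic_zero)
  have hp : ¬IsOfFinOrder (q ^ 4) := (hq.pow four_pos).not_isOfFinOrder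
  have signP (j : ℕ) : (-1 : K) ^ ((j + 2) * (j + 2 - 1) / 2) = -(-1) ^ (j * (j - 1) / 2) := by
    simp only [← Nat.choose_two_right, neg_one_pow_choose_two_add_two]
  have signM (j : ℕ) : (-1 : K) ^ ((j + 2) * (j + 2 + 1) / 2) = -(-1) ^ (j * (j + 1) / 2) := by
    have h (k : ℕ) : k * (k + 1) / 2 = (k + 1).choose 2 := by
      rw [Nat.choose_two_right, Nat.add_sub_cancel, mul_comm]
    rw [h, h, neg_one_pow_choose_two_add_two]
  exact ⟨Dk0_weightVec d _, De0_weightVec_signed_qbinom hq0 hp signP d,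
    Dk0_weightVec d _, De0_weightVec_signed_qbinom hq0 hp signM d⟩
end
end

section
/- Let K be a commutative ring (e.g. a field), and for μ, ν, z ∈ K let R_{μ,ν}(z) be the endomorphism of K²⊗K² whose matrix in the ordered basis (e_0⊗e_0, e_0⊗e_1, e_1⊗e_0, e_1⊗e_1) is [[z−μν, 0, 0, 0], [0, ν−μz, (1−ν²)z, 0], [0, 1−μ², μ−νz, 0], [0, 0, 0, 1−μνz]] (columns indexed by inputs). Then for all λ, μ, ν, x, y ∈ K the Yang–Baxter equation holds on K²⊗K²⊗K²: (R_{λ,μ}(x))_{12} (R_{λ,ν}(xy))_{13} (R_{μ,ν}(y))_{23} = (R_{μ,ν}(y))_{23} (R_{λ,ν}(xy))_{13} (R_{λ,μ}(x))_{12}, where the subscripts indicate the pair of tensor factors on which the operator acts nontrivially (acting as the identity on the remaining factor). -/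
/- The 4×4 R matrix R_{μ,ν}(z) (free-fermion / U_q(sl(1|1))-type) satisfies the Yang-Baxter
equation R_{λ,μ}(x)₁₂ R_{λ,ν}(xy)₁₃ R_{μ,ν}(y)₂₃ = R_{μ,ν}(y)₂₃ R_{λ,ν}(xy)₁₃ R_{λ,μ}(x)₁₂
on K²⊗K²⊗K² over any commutative ring K. -/

noncomputable section
open TensorProduct

/-- The operator `R_{μ,ν}(z)` on `K²⊗K²`, with matrix
`[[z-μν,0,0,0],[0,ν-μz,(1-ν²)z,0],[0,1-μ²,μ-νz,0],[0,0,0,1-μνz]]`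
in the ordered basis `(e₀⊗e₀, e₀⊗e₁, e₁⊗e₀, e₁⊗e₁)` (columns indexed by inputs). -/
def Rmn {K : Type} [CommRing K] (μ ν z : K) :
    Module.End K ((Fin 2 → K) ⊗[K] (Fin 2 → K)) :=
  ((Pi.basisFun K (Fin 2)).tensorProduct (Pi.basisFun K (Fin 2))).constr K
    (fun p : Fin 2 × Fin 2 =>
      if p = (0, 0) then (z - μ * ν) • ((Pi.single 0 1 : Fin 2 → K) ⊗ₜ[K] (Pi.single 0 1 : Fin 2 → K))
      else if p = (0, 1) then
        (ν - μ * z) • ((Pi.single 0 1 : Fin 2 → K) ⊗ₜ[K] (Pi.single 1 1 : Fin 2 → K)) +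
          (1 - μ ^ 2) • ((Pi.single 1 1 : Fin 2 → K) ⊗ₜ[K] (Pi.single 0 1 : Fin 2 → K))
      else if p = (1, 0) then
        ((1 - ν ^ 2) * z) • ((Pi.single 0 1 : Fin 2 → K) ⊗ₜ[K] (Pi.single 1 1 : Fin 2 → K)) +
          (μ - ν * z) • ((Pi.single 1 1 : Fin 2 → K) ⊗ₜ[K] (Pi.single 0 1 : Fin 2 → K))
      else (1 - μ * ν * z) • ((Pi.single 1 1 : Fin 2 → K) ⊗ₜ[K] (Pi.single 1 1 : Fin 2 → K)))

/-- `A₁₂ = A ⊗ id`, acting on the first two factors of `K²⊗(K²⊗K²)`. -/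
def op12 {K : Type} [CommRing K] (A : Module.End K ((Fin 2 → K) ⊗[K] (Fin 2 → K))) :
    Module.End K ((Fin 2 → K) ⊗[K] ((Fin 2 → K) ⊗[K] (Fin 2 → K))) :=
  (TensorProduct.assoc K (Fin 2 → K) (Fin 2 → K) (Fin 2 → K)).toLinearMap ∘ₗ
    TensorProduct.map A LinearMap.id ∘ₗ
    (TensorProduct.assoc K (Fin 2 → K) (Fin 2 → K) (Fin 2 → K)).symm.toLinearMap

/-- `A₂₃ = id ⊗ A`. -/
def op23 {K : Type} [CommRing K] (A : Module.End K ((Fin 2 → K) ⊗[K] (Fin 2 → K))) :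
    Module.End K ((Fin 2 → K) ⊗[K] ((Fin 2 → K) ⊗[K] (Fin 2 → K))) :=
  TensorProduct.map LinearMap.id A

/-- The flip of the second and third factors. -/
def swap23 {K : Type} [CommRing K] :
    Module.End K ((Fin 2 → K) ⊗[K] ((Fin 2 → K) ⊗[K] (Fin 2 → K))) :=
  TensorProduct.map LinearMap.id (TensorProduct.comm K (Fin 2 → K) (Fin 2 → K)).toLinearMap

/-- `A₁₃`: `A` acting on the first and third factors, identity on the second. -/
def op13 {K : Type} [CommRing K] (A : Module.End K ((Fin 2 → K) ⊗[K] (Fin 2 → K))) :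
    Module.End K ((Fin 2 → K) ⊗[K] ((Fin 2 → K) ⊗[K] (Fin 2 → K))) :=
  swap23 ∘ₗ op12 A ∘ₗ swap23

/-! Both sides are linear, so it suffices to compare them on the eight basis vectors
`e_i ⊗ e_j ⊗ e_k`. Each `R_{μ,ν}(z)` preserves the number of `e_1` factors, so on such a vector
both sides land in the span of at most three basis vectors, and the equation reduces to a few
polynomial identities in `λ, μ, ν, x, y`, which `module` verifies. -/

lemma LinearMap.ext_basis_tmul_tmul {R M N P Q ι κ τ : Type*} [CommSemiring R]
    [AddCommMonoid M] [AddCommMonoid N] [AddCommMonoid P] [AddCommMonoid Q]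
    [Module R M] [Module R N] [Module R P] [Module R Q]
    (b : Module.Basis ι R M) (c : Module.Basis κ R N) (d : Module.Basis τ R P)
    {f g : M ⊗[R] (N ⊗[R] P) →ₗ[R] Q}
    (h : ∀ i j k, f (b i ⊗ₜ (c j ⊗ₜ d k)) = g (b i ⊗ₜ (c j ⊗ₜ d k))) : f = g :=
  (b.tensorProduct (c.tensorProduct d)).ext fun ⟨i, j, k⟩ => by
    simpa only [Module.Basis.tensorProduct_apply] using h i j k

section
variable {K : Type} [CommRing K]

local notation "e" i => (Pi.single i 1 : Fin 2 → K)

lemma Rmn_single_tmul_single (μ ν z : K) (i j : Fin 2) :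
    Rmn μ ν z ((e i) ⊗ₜ (e j)) =
      if (i, j) = (0, 0) then (z - μ * ν) • ((e 0) ⊗ₜ (e 0))
      else if (i, j) = (0, 1) then (ν - μ * z) • ((e 0) ⊗ₜ (e 1)) + (1 - μ ^ 2) • ((e 1) ⊗ₜ (e 0))
      else if (i, j) = (1, 0) then
        ((1 - ν ^ 2) * z) • ((e 0) ⊗ₜ (e 1)) + (μ - ν * z) • ((e 1) ⊗ₜ (e 0))
      else (1 - μ * ν * z) • ((e 1) ⊗ₜ (e 1)) := by
  rw [show (e i) ⊗ₜ (e j) = (Pi.basisFun K (Fin 2)).tensorProduct (Pi.basisFun K (Fin 2)) (i, j) by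
    simp]
  exact Module.Basis.constr_basis _ _ _ _

@[simp] lemma Rmn_e00 (μ ν z : K) : Rmn μ ν z ((e 0) ⊗ₜ (e 0)) = (z - μ * ν) • ((e 0) ⊗ₜ (e 0)) := by
  simp [Rmn_single_tmul_single]

@[simp] lemma Rmn_e01 (μ ν z : K) :
    Rmn μ ν z ((e 0) ⊗ₜ (e 1)) = (ν - μ * z) • ((e 0) ⊗ₜ (e 1)) + (1 - μ ^ 2) • ((e 1) ⊗ₜ (e 0)) := by
  simp [Rmn_single_tmul_single]

@[simp] lemma Rmn_e10 (μ ν z : K) :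
    Rmn μ ν z ((e 1) ⊗ₜ (e 0)) =
      ((1 - ν ^ 2) * z) • ((e 0) ⊗ₜ (e 1)) + (μ - ν * z) • ((e 1) ⊗ₜ (e 0)) := by
  simp [Rmn_single_tmul_single]

@[simp] lemma Rmn_e11 (μ ν z : K) :
    Rmn μ ν z ((e 1) ⊗ₜ (e 1)) = (1 - μ * ν * z) • ((e 1) ⊗ₜ (e 1)) := by
  simp [Rmn_single_tmul_single]

variable (A : Module.End K ((Fin 2 → K) ⊗[K] (Fin 2 → K))) (a b c : Fin 2 → K)

@[simp] lemma op12_tmul : op12 A (a ⊗ₜ (b ⊗ₜ c)) = TensorProduct.assoc K _ _ _ (A (a ⊗ₜ b) ⊗ₜ c) := rfl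

@[simp] lemma op23_tmul : op23 A (a ⊗ₜ (b ⊗ₜ c)) = a ⊗ₜ A (b ⊗ₜ c) := rfl

@[simp] lemma swap23_tmul : swap23 (a ⊗ₜ (b ⊗ₜ c)) = a ⊗ₜ (c ⊗ₜ b) := rfl

@[simp] lemma op13_tmul : op13 A (a ⊗ₜ (b ⊗ₜ c)) = swap23 (op12 A (a ⊗ₜ (c ⊗ₜ b))) := rfl

end

theorem Rmn_yang_baxter {K : Type} [CommRing K] (lam μ ν x y : K) :
    op12 (Rmn lam μ x) * op13 (Rmn lam ν (x * y)) * op23 (Rmn μ ν y) =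
      op23 (Rmn μ ν y) * op13 (Rmn lam ν (x * y)) * op12 (Rmn lam μ x) := by
  let e := Pi.basisFun K (Fin 2)
  refine LinearMap.ext_basis_tmul_tmul e e e fun i j k => ?_
  fin_cases i <;> fin_cases j <;> fin_cases k <;>
    simp only [e, Pi.basisFun_apply, Module.End.mul_apply, Fin.zero_eta, Fin.mk_one, Fin.isValue,
      op12_tmul, op13_tmul, op23_tmul, swap23_tmul, Rmn_e00, Rmn_e01, Rmn_e10, Rmn_e11,
      map_add, map_smul, tmul_add, add_tmul, tmul_smul, ← smul_tmul', TensorProduct.assoc_tmul] <;>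
    module
end
end
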